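/- arXiv:1310.5898 — 2 statements merged into one kernel-verified Lean document; each statement's English description precedes it below -/
import Mathlib

section
/- Let G be a 3-regular tree on a countable vertex set V, and let k ≥ 1 be an integer. Then there exists a partition of V into finite sets, each of which induces in G a path on k+1 vertices (i.e., V admits a covering by k-chains in which every vertex belongs to exactly one k-chain). -/
/-- `p` parametrizes an induced path in `G`: it is injective, and two vertices on it are
adjacent in `G` iff they are consecutive. -/
def IsInducedPathParam {V : Type*} (G : SimpleGraph V) {n : ℕ} (p : Fin n → V) : Prop :=
  Function.Injective p ∧
    ∀ i j : Fin n, G.Adj (p i) (p j) ↔ (i.val + 1 = j.val ∨ j.val + 1 = i.val)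

/-- A 3-regular tree: connected, acyclic, every vertex has exactly 3 neighbours. -/
def IsThreeRegularTree {V : Type*} (G : SimpleGraph V) : Prop :=
  G.Connected ∧ G.IsAcyclic ∧ ∀ v : V, (G.neighborSet v).ncard = 3

/-!
Root the tree at a vertex `r`. Every vertex has at most one neighbour closer to `r`, so, having
at least two neighbours, it has a child: a neighbour one step farther from `r`. Choosing one child
per vertex gives an injective map `c` that raises the distance to `r` by one. Its forward orbits
are therefore induced rays of the tree, and they partition the vertices. Cutting every orbit into
consecutive blocks of `k + 1` vertices, counted from its first vertex, yields the chains.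
-/

open Function

section OrbitIndex

variable {α : Type*} {c : α → α} {d : α → ℕ}

lemma apply_iterate_eq_add (hd : ∀ a, d (c a) = d a + 1) (j : ℕ) (a : α) :
    d (c^[j] a) = d a + j :=
  (Semiconj.iterate_right (gb := Nat.succ) hd j a).trans (Nat.succ_iterate _ _)

/-- How often `a` can be pulled back along `c`; the grading `d` makes the recursion terminate. -/
noncomputable def orbitIndex (hd : ∀ a, d (c a) = d a + 1) (a : α) : ℕ :=
  open scoped Classical in
  if h : ∃ b, c b = a then orbitIndex hd h.choose + 1 else 0
termination_by d a
decreasing_by have := hd h.choose; rw [h.choose_spec] at this; omega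

lemma orbitIndex_apply (hc : Injective c) (hd : ∀ a, d (c a) = d a + 1) (a : α) :
    orbitIndex hd (c a) = orbitIndex hd a + 1 := by
  have h : ∃ b, c b = c a := ⟨a, rfl⟩
  rw [orbitIndex.eq_def, dif_pos h, hc h.choose_spec]

lemma exists_iterate_eq_of_le_orbitIndex (hd : ∀ a, d (c a) = d a + 1) {j : ℕ} :
    ∀ {a : α}, j ≤ orbitIndex hd a → ∃ b, c^[j] b = a := by
  induction j with
  | zero => exact fun {a} _ => ⟨a, rfl⟩
  | succ j ih =>
    intro a hj
    rw [orbitIndex.eq_def] at hj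
    split_ifs at hj with h
    · obtain ⟨b, hb⟩ := ih (Nat.le_of_succ_le_succ hj)
      exact ⟨b, by rw [iterate_succ_apply', hb, h.choose_spec]⟩
    · omega

theorem existsUnique_mem_range_iterate (hc : Injective c) (hd : ∀ a, d (c a) = d a + 1)
    (k : ℕ) (a : α) :
    ∃! b : {b // orbitIndex hd b % (k + 1) = 0},
      a ∈ Set.range fun j : Fin (k + 1) => c^[j] b.1 := by
  have index_iterate := apply_iterate_eq_add (orbitIndex_apply hc hd)
  obtain ⟨b, hb⟩ :=
    exists_iterate_eq_of_le_orbitIndex hd (Nat.mod_le (orbitIndex hd a) (k + 1))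
  have hba := index_iterate (orbitIndex hd a % (k + 1)) b
  rw [hb] at hba
  have hb_index : orbitIndex hd b = (k + 1) * (orbitIndex hd a / (k + 1)) := by
    have := Nat.div_add_mod (orbitIndex hd a) (k + 1)
    omega
  refine ⟨⟨b, by rw [hb_index, Nat.mul_mod_right]⟩,
    ⟨⟨_, Nat.mod_lt _ k.succ_pos⟩, hb⟩, ?_⟩
  rintro ⟨b', hb'⟩ ⟨j, hj⟩
  dsimp only at hj
  have hj' : orbitIndex hd a % (k + 1) = j := by
    rw [← hj, index_iterate, ← Nat.div_add_mod (orbitIndex hd b') (k + 1), hb', Nat.add_zero,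
      Nat.mul_add_mod, Nat.mod_eq_of_lt j.isLt]
  rw [hj', ← hj] at hb
  exact Subtype.ext (hc.iterate j hb.symm)

end OrbitIndex

namespace SimpleGraph

variable {V : Type*} {G : SimpleGraph V}

lemma IsTree.eq_of_adj_of_dist_add_one_eq (hG : G.IsTree) {r x y w : V} (hx : G.Adj x w)
    (hy : G.Adj y w) (hxw : G.dist r x + 1 = G.dist r w) (hyw : G.dist r y + 1 = G.dist r w) :
    x = y := by
  obtain ⟨p, hp⟩ := hG.connected.exists_walk_length_eq_dist r x
  obtain ⟨q, hq⟩ := hG.connected.exists_walk_length_eq_dist r y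
  have hpx : (p.concat hx).IsPath :=
    (p.concat hx).isPath_of_length_eq_dist (by rw [Walk.length_concat, hp, hxw])
  have hqy : (q.concat hy).IsPath :=
    (q.concat hy).isPath_of_length_eq_dist (by rw [Walk.length_concat, hq, hyw])
  have := hG.isAcyclic.subsingleton_path r w
  exact (Walk.concat_inj (congrArg Subtype.val (Subsingleton.elim (⟨_, hpx⟩ : G.Path r w)
    ⟨_, hqy⟩))).1

lemma IsTree.exists_adj_dist_eq_add_one (hG : G.IsTree) (r : V) {v : V}
    (hv : (G.neighborSet v).Nontrivial) : ∃ w, G.Adj v w ∧ G.dist r w = G.dist r v + 1 := by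
  obtain ⟨x, hx, y, hy, hxy⟩ := hv
  have hx' := hG.dist_eq_dist_add_one_of_adj r (G.adj_symm hx)
  have hy' := hG.dist_eq_dist_add_one_of_adj r (G.adj_symm hy)
  by_contra! h
  exact hxy (hG.eq_of_adj_of_dist_add_one_eq (r := r) (G.adj_symm hx) (G.adj_symm hy)
    (by have := h x hx; omega) (by have := h y hy; omega))

lemma IsTree.exists_injective_adj_dist_eq_add_one (hG : G.IsTree)
    (hV : ∀ v, (G.neighborSet v).Nontrivial) (r : V) :
    ∃ c : V → V, Injective c ∧ ∀ v, G.Adj v (c v) ∧ G.dist r (c v) = G.dist r v + 1 := by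
  choose c hc using fun v => hG.exists_adj_dist_eq_add_one r (hV v)
  refine ⟨c, fun a b hab => ?_, hc⟩
  refine hG.eq_of_adj_of_dist_add_one_eq (hc a).1 (hab ▸ (hc b).1) (hc a).2.symm ?_
  rw [hab, (hc b).2]

end SimpleGraph

lemma isInducedPathParam_iterate {V : Type*} {G : SimpleGraph V} {c : V → V} {d : V → ℕ}
    (hc : ∀ v, G.Adj v (c v)) (hd : ∀ v, d (c v) = d v + 1)
    (hadj : ∀ x y, G.Adj x y → d x = d y + 1 ∨ d y = d x + 1) (u : V) (n : ℕ) :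
    IsInducedPathParam G fun j : Fin n => c^[j] u := by
  have hdu := fun j => apply_iterate_eq_add hd j u
  refine ⟨fun i j hij => Fin.ext ?_, fun i j => ⟨fun hij => ?_, ?_⟩⟩
  · have := congrArg d hij
    simp only [hdu] at this
    omega
  · have := hadj _ _ hij
    simp only [hdu] at this
    omega
  · rintro (hij | hij)
    · simpa only [← hij, iterate_succ_apply'] using hc _
    · simpa only [← hij, iterate_succ_apply'] using G.adj_symm (hc _)

theorem covering_by_chains_exists_general {V : Type*} [Countable V] (G : SimpleGraph V)
    (hG : IsThreeRegularTree G) (k : ℕ) :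
    ∃ (ι : Type) (p : ι → Fin (k + 1) → V),
      (∀ i, IsInducedPathParam G (p i)) ∧
      (∀ v : V, ∃! i : ι, v ∈ Set.range (p i)) := by
  obtain ⟨hconn, hacyc, hdeg⟩ := hG
  have htree : G.IsTree := ⟨hconn, hacyc⟩
  have hnontriv : ∀ v, (G.neighborSet v).Nontrivial := fun v => by
    have : Finite (G.neighborSet v) := Set.finite_of_ncard_ne_zero (by rw [hdeg v]; omega)
    rw [← Set.one_lt_ncard_iff_nontrivial, hdeg v]
    omega
  obtain ⟨r⟩ := hconn.nonempty
  obtain ⟨c, hc, hcr⟩ := htree.exists_injective_adj_dist_eq_add_one hnontriv r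
  have hd : ∀ v, G.dist r (c v) = G.dist r v + 1 := fun v => (hcr v).2
  let e := equivShrink.{0} {b // orbitIndex hd b % (k + 1) = 0}
  refine ⟨Shrink {b // orbitIndex hd b % (k + 1) = 0}, fun i j => c^[j] (e.symm i).1,
    fun i => isInducedPathParam_iterate (fun v => (hcr v).1) hd
      (fun x y hxy => htree.dist_eq_dist_add_one_of_adj r hxy) _ _,
    fun v => e.existsUnique_congr_left.mp (existsUnique_mem_range_iterate hc hd k v)⟩

/-- Every 3-regular tree on a countable vertex set admits, for each `k ≥ 1`, a partition of
its vertex set into `k`-chains, i.e. induced paths on `k + 1` vertices. -/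
theorem covering_by_chains_exists {V : Type*} [Countable V] (G : SimpleGraph V)
    (hG : IsThreeRegularTree G) (k : ℕ) (hk : 1 ≤ k) :
    ∃ (ι : Type) (p : ι → Fin (k + 1) → V),
      (∀ i, IsInducedPathParam G (p i)) ∧
      (∀ v : V, ∃! i : ι, v ∈ Set.range (p i)) :=
  covering_by_chains_exists_general G hG k
end

section
/- Let x > 1 and z > 0 be real numbers, set y = x − √(4z(x²−1) + (z+1)²), and assume y ≥ z. Then the cross-ratio of the inner pair against the outer pair satisfies R(y−z, y+z; x−1, −(x−1)) = 2z(2x−2)/((x−z−1)² − y²) ≤ 1/(x−1). -/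
/-- The cross-ratio `R(a,b;c,d) = −((b−a)(d−c))/((b−c)(d−a))`. -/
noncomputable def crossR (a b c d : ℝ) : ℝ :=
  -((b - a) * (d - c)) / ((b - c) * (d - a))

/-!
Write `s` for the square root, so `y = x − s`, and put `κ = (x − 1) − 2z(2x − 1)`. The polynomial
identities `(x − z)² − s² = (x + 1)κ` and `s² − (z + 1 + 4z(x − 1))² = 4z(x − 1)κ` show that the
hypothesis `y ≥ z`, i.e. `s ≤ x − z`, forces `κ ≥ 0` and then `s ≥ z + 1 + 4z(x − 1)`. The
denominator factors as `(x − z − 1)² − y² = (s − z − 1)((x − 1) + (y − z))`, which is therefore at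
least `4z(x − 1) · (x − 1)`; this is the inequality with denominators cleared.
-/

lemma crossR_sub_add_neg (a r c : ℝ) :
    crossR (a - r) (a + r) c (-c) = 4 * r * c / ((c - r) ^ 2 - a ^ 2) := by
  unfold crossR
  congr 1 <;> ring

section

variable {x z : ℝ}

lemma two_mul_mul_le_of_sqrt_le (hx : -1 < x)
    (h : √(4 * z * (x ^ 2 - 1) + (z + 1) ^ 2) ≤ x - z) :
    2 * z * (2 * x - 1) ≤ x - 1 := by
  obtain ⟨-, hsq⟩ := Real.sqrt_le_iff.mp h
  have hfactor : (x - z) ^ 2 - (4 * z * (x ^ 2 - 1) + (z + 1) ^ 2)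
      = (x + 1) * (x - 1 - 2 * z * (2 * x - 1)) := by ring
  have hκ : 0 ≤ (x + 1) * (x - 1 - 2 * z * (2 * x - 1)) := by linarith
  linarith [nonneg_of_mul_nonneg_right hκ (by linarith : 0 < x + 1)]

lemma le_sqrt_of_two_mul_mul_le (hx : 1 ≤ x) (hz : 0 ≤ z)
    (h : 2 * z * (2 * x - 1) ≤ x - 1) :
    z + 1 + 4 * z * (x - 1) ≤ √(4 * z * (x ^ 2 - 1) + (z + 1) ^ 2) := by
  refine Real.le_sqrt_of_sq_le ?_
  have hx₁ : 0 ≤ x - 1 := sub_nonneg.2 hx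
  have hfactor : 4 * z * (x ^ 2 - 1) + (z + 1) ^ 2 - (z + 1 + 4 * z * (x - 1)) ^ 2
      = 4 * z * (x - 1) * (x - 1 - 2 * z * (2 * x - 1)) := by ring
  have hκ : 0 ≤ 4 * z * (x - 1) * (x - 1 - 2 * z * (2 * x - 1)) :=
    mul_nonneg (by positivity) (sub_nonneg.2 h)
  linarith

lemma four_mul_mul_sq_le_sq_sub_sq {y : ℝ} (hx : 1 < x) (hz : 0 ≤ z)
    (hy : y = x - √(4 * z * (x ^ 2 - 1) + (z + 1) ^ 2)) (hyz : z ≤ y) :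
    4 * z * (x - 1) ^ 2 ≤ (x - z - 1) ^ 2 - y ^ 2 := by
  have hκ := two_mul_mul_le_of_sqrt_le (x := x) (z := z) (by linarith) (by linarith)
  have hs := le_sqrt_of_two_mul_mul_le hx.le hz hκ
  set s := √(4 * z * (x ^ 2 - 1) + (z + 1) ^ 2)
  have hx₁ : 0 ≤ x - 1 := by linarith
  have hlead : 0 ≤ 4 * z * (x - 1) := by positivity
  calc 4 * z * (x - 1) ^ 2 = 4 * z * (x - 1) * (x - 1) := by ring
    _ ≤ (s - z - 1) * ((x - 1) + (y - z)) :=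
        mul_le_mul (by linarith) (by linarith) hx₁ (by linarith)
    _ = (x - z - 1) ^ 2 - y ^ 2 := by rw [hy]; ring

end

/-- For `x > 1`, `z > 0`, `y = x − √(4z(x²−1) + (z+1)²)` with `y ≥ z`, the cross-ratio of the
inner pair against the outer pair satisfies
`R(y−z, y+z; x−1, −(x−1)) = 2z(2x−2)/((x−z−1)² − y²) ≤ 1/(x−1)`. -/
theorem crossR_inner_outer (x y z : ℝ) (hx : 1 < x) (hz : 0 < z)
    (hy : y = x - Real.sqrt (4 * z * (x ^ 2 - 1) + (z + 1) ^ 2)) (hyz : z ≤ y) :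
    crossR (y - z) (y + z) (x - 1) (-(x - 1)) =
        2 * z * (2 * x - 2) / ((x - z - 1) ^ 2 - y ^ 2) ∧
      2 * z * (2 * x - 2) / ((x - z - 1) ^ 2 - y ^ 2) ≤ 1 / (x - 1) := by
  have hD := four_mul_mul_sq_le_sq_sub_sq hx hz.le hy hyz
  have hDpos : 0 < (x - z - 1) ^ 2 - y ^ 2 :=
    lt_of_lt_of_le (by have := sub_pos.2 hx; positivity) hD
  refine ⟨?_, ?_⟩
  · rw [crossR_sub_add_neg]
    congr 1 <;> ring
  · rw [div_le_div_iff₀ hDpos (sub_pos.2 hx)]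
    linarith
end
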